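/- arXiv:2601.01575 — 2 statements merged into one kernel-verified Lean document; each statement's English description precedes it below -/
import Mathlib

section
/- Let A be a symmetric real n×n matrix, b ∈ ℝⁿ nonzero with grade g with respect to A, and let 1 ≤ t < g. For 0 ≤ s ≤ t let p_s be a minimizer of ‖b − A p‖ over p ∈ K_s(A,b) (with p_0 = 0) and r_s := b − A p_s. If r_sᵀ A r_s > 0 for all 0 ≤ s ≤ t−1, then A b ≠ 0 and p_tᵀ b ≥ p₁ᵀ b = (bᵀAb/‖Ab‖²)‖b‖². -/
open Matrix

/-- The Euclidean norm on `Fin n → ℝ`. -/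
noncomputable def euclNorm {n : ℕ} (v : Fin n → ℝ) : ℝ := Real.sqrt (∑ i, v i ^ 2)

/-- The Krylov subspace `K_t(A,b) = span {b, Ab, …, A^{t-1} b}` (with `K_0 = {0}`). -/
noncomputable def Krylov {n : ℕ} (A : Matrix (Fin n) (Fin n) ℝ) (b : Fin n → ℝ) (t : ℕ) :
    Submodule ℝ (Fin n → ℝ) :=
  Submodule.span ℝ (Set.range fun i : Fin t => (A ^ (i : ℕ)).mulVec b)

/-- `g` is the grade of `b` with respect to `A`. -/
def IsGrade {n : ℕ} (A : Matrix (Fin n) (Fin n) ℝ) (b : Fin n → ℝ) (g : ℕ) : Prop :=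
  0 < g ∧ (∀ t : ℕ, t ≤ g → Module.finrank ℝ (Krylov A b t) = t) ∧
    (∀ t : ℕ, g < t → Module.finrank ℝ (Krylov A b t) = g)

namespace MinresAux

variable {n : ℕ} {A : Matrix (Fin n) (Fin n) ℝ} {b : Fin n → ℝ}

lemma dot_self_nonneg (v : Fin n → ℝ) : 0 ≤ v ⬝ᵥ v :=
  Finset.sum_nonneg fun i _ => mul_self_nonneg _

lemma dot_self_pos {v : Fin n → ℝ} (h : v ≠ 0) : 0 < v ⬝ᵥ v :=
  lt_of_le_of_ne (dot_self_nonneg v) fun h' => h (dotProduct_self_eq_zero.mp h'.symm)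

lemma euclNorm_eq (v : Fin n → ℝ) : euclNorm v = Real.sqrt (v ⬝ᵥ v) := by
  unfold euclNorm dotProduct
  congr 1
  exact Finset.sum_congr rfl fun i _ => (sq (v i)).symm ▸ rfl

lemma sq_euclNorm (v : Fin n → ℝ) : euclNorm v ^ 2 = v ⬝ᵥ v := by
  rw [euclNorm_eq, Real.sq_sqrt (dot_self_nonneg v)]

lemma dot_le_of_euclNorm_le {v w : Fin n → ℝ} (h : euclNorm v ≤ euclNorm w) :
    v ⬝ᵥ v ≤ w ⬝ᵥ w := by
  rw [euclNorm_eq, euclNorm_eq] at h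
  exact (Real.sqrt_le_sqrt_iff (dot_self_nonneg w)).mp h

lemma adj (hA : A.IsSymm) (x y : Fin n → ℝ) : A.mulVec x ⬝ᵥ y = x ⬝ᵥ A.mulVec y := by
  rw [Matrix.dotProduct_mulVec, ← Matrix.mulVec_transpose, hA.eq]

lemma krylov_mono {s s' : ℕ} (h : s ≤ s') : Krylov A b s ≤ Krylov A b s' := by
  apply Submodule.span_mono
  rintro _ ⟨i, rfl⟩
  exact ⟨⟨(i : ℕ), lt_of_lt_of_le i.2 h⟩, rfl⟩

lemma pow_mem_krylov {i s : ℕ} (h : i < s) : (A ^ i).mulVec b ∈ Krylov A b s :=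
  Submodule.subset_span ⟨⟨i, h⟩, rfl⟩

lemma self_mem_krylov {s : ℕ} (h : 1 ≤ s) : b ∈ Krylov A b s := by
  simpa using pow_mem_krylov (A := A) (b := b) (i := 0) h

lemma krylov_zero : Krylov A b 0 = ⊥ := by
  simp [Krylov]

lemma mulVec_krylov_mem {s : ℕ} {x : Fin n → ℝ} (hx : x ∈ Krylov A b s) :
    A.mulVec x ∈ Krylov A b (s + 1) := by
  have hmap : Submodule.map A.mulVecLin (Krylov A b s) ≤ Krylov A b (s + 1) := by
    rw [Krylov, Submodule.map_span, Submodule.span_le]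
    rintro _ ⟨_, ⟨i, rfl⟩, rfl⟩
    have : A.mulVecLin ((A ^ (i : ℕ)).mulVec b) = (A ^ ((i : ℕ) + 1)).mulVec b := by
      simp [Matrix.mulVecLin_apply, Matrix.mulVec_mulVec, pow_succ']
    rw [this]
    exact pow_mem_krylov (Nat.succ_lt_succ i.2)
  exact hmap ⟨x, hx, rfl⟩


variable {g : ℕ}

lemma krylov_li (hg : IsGrade A b g) {m : ℕ} (hm : m ≤ g) :
    LinearIndependent ℝ (fun i : Fin m => (A ^ (i : ℕ)).mulVec b) := by
  rw [linearIndependent_iff_card_eq_finrank_span]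
  have h := hg.2.1 m hm
  rw [Krylov] at h
  simpa [Set.finrank] using h.symm

lemma krylov_li_shift (hg : IsGrade A b g) {s : ℕ} (hs : s < g) :
    LinearIndependent ℝ (fun i : Fin s => (A ^ ((i : ℕ) + 1)).mulVec b) := by
  have h := (krylov_li hg hs).comp Fin.succ (Fin.succ_injective s)
  have e : ((fun i : Fin (s + 1) => (A ^ (i : ℕ)).mulVec b) ∘ Fin.succ) =
      fun i : Fin s => (A ^ ((i : ℕ) + 1)).mulVec b := by
    funext i
    simp [Fin.val_succ]
  rwa [e] at h

lemma mulVec_comb {s : ℕ} (c : Fin s → ℝ) :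
    A.mulVec (∑ i : Fin s, c i • (A ^ (i : ℕ)).mulVec b)
      = ∑ i : Fin s, c i • (A ^ ((i : ℕ) + 1)).mulVec b := by
  calc A.mulVec (∑ i : Fin s, c i • (A ^ (i : ℕ)).mulVec b)
      = A.mulVecLin (∑ i : Fin s, c i • (A ^ (i : ℕ)).mulVec b) := (A.mulVecLin_apply _).symm
    _ = ∑ i : Fin s, A.mulVecLin (c i • (A ^ (i : ℕ)).mulVec b) := map_sum _ _ _
    _ = ∑ i : Fin s, c i • (A ^ ((i : ℕ) + 1)).mulVec b := by
        refine Finset.sum_congr rfl fun i _ => ?_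
        simp [Matrix.mulVecLin_apply, Matrix.mulVec_smul, Matrix.mulVec_mulVec, pow_succ']

lemma krylov_inj (hg : IsGrade A b g) {s : ℕ} (hs : s < g) {x : Fin n → ℝ}
    (hx : x ∈ Krylov A b s) (hAx : A.mulVec x = 0) : x = 0 := by
  obtain ⟨c, hc⟩ := (Submodule.mem_span_range_iff_exists_fun ℝ).mp hx
  have li2 := krylov_li_shift hg hs
  have hsum : ∑ i : Fin s, c i • (A ^ ((i : ℕ) + 1)).mulVec b = 0 := by
    rw [← mulVec_comb, hc, hAx]
  have hc0 : ∀ i, c i = 0 := Fintype.linearIndependent_iff.mp li2 c hsum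
  rw [← hc]
  simp [hc0]

lemma resid_ne (hg : IsGrade A b g) {s : ℕ} (hs : s < g) {x : Fin n → ℝ}
    (hx : x ∈ Krylov A b s) : b - A.mulVec x ≠ 0 := by
  intro h
  have hb : b = A.mulVec x := sub_eq_zero.mp h
  obtain ⟨c, hc⟩ := (Submodule.mem_span_range_iff_exists_fun ℝ).mp hx
  have li : LinearIndependent ℝ (fun i : Fin (s + 1) => (A ^ (i : ℕ)).mulVec b) :=
    krylov_li hg hs
  set d : Fin (s + 1) → ℝ := Fin.cases 1 (fun i => -c i) with hd
  have key : ∑ j : Fin (s + 1), d j • (A ^ (j : ℕ)).mulVec b = 0 := by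
    rw [Fin.sum_univ_succ]
    simp only [hd, Fin.cases_zero, Fin.cases_succ, Fin.val_succ, Fin.val_zero, pow_zero,
      Matrix.one_mulVec, one_smul, neg_smul]
    rw [Finset.sum_neg_distrib, ← mulVec_comb, hc, ← hb]
    abel
  have h0 := Fintype.linearIndependent_iff.mp li d key 0
  simp [hd] at h0

lemma AK_eq_span (s : ℕ) :
    Submodule.map A.mulVecLin (Krylov A b s)
      = Submodule.span ℝ (Set.range fun i : Fin s => (A ^ ((i : ℕ) + 1)).mulVec b) := by
  rw [Krylov, Submodule.map_span, ← Set.range_comp]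
  have e : (⇑A.mulVecLin ∘ fun i : Fin s => (A ^ (i : ℕ)).mulVec b)
      = fun i : Fin s => (A ^ ((i : ℕ) + 1)).mulVec b := by
    funext i
    simp [Matrix.mulVecLin_apply, Matrix.mulVec_mulVec, pow_succ']
  rw [e]

lemma finrank_AK (hg : IsGrade A b g) {s : ℕ} (hs : s < g) :
    Module.finrank ℝ (Submodule.map A.mulVecLin (Krylov A b s)) = s := by
  rw [AK_eq_span]
  simpa using finrank_span_eq_card (krylov_li_shift hg hs)

lemma mem_AK {s : ℕ} {z : Fin n → ℝ} :
    z ∈ Submodule.map A.mulVecLin (Krylov A b s) ↔ ∃ y ∈ Krylov A b s, A.mulVec y = z := by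
  simp [Submodule.mem_map, Matrix.mulVecLin_apply]


/-- Orthogonality of the residual to `A·W` from the minimization property. -/
lemma min_orth {W : Submodule ℝ (Fin n → ℝ)} {x : Fin n → ℝ} (hx : x ∈ W)
    (hm : ∀ q ∈ W, (b - A.mulVec x) ⬝ᵥ (b - A.mulVec x) ≤ (b - A.mulVec q) ⬝ᵥ (b - A.mulVec q))
    {y : Fin n → ℝ} (hy : y ∈ W) : (b - A.mulVec x) ⬝ᵥ A.mulVec y = 0 := by
  set r := b - A.mulVec x with hr
  set w := A.mulVec y with hw
  have key : ∀ ε : ℝ, 0 ≤ ε ^ 2 * (w ⬝ᵥ w) - 2 * ε * (r ⬝ᵥ w) := by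
    intro ε
    have hq : x + ε • y ∈ W := W.add_mem hx (W.smul_mem ε hy)
    have h1 := hm _ hq
    have e1 : b - A.mulVec (x + ε • y) = r - ε • w := by
      rw [Matrix.mulVec_add, Matrix.mulVec_smul, hr, hw]
      abel
    rw [e1] at h1
    have e2 : (r - ε • w) ⬝ᵥ (r - ε • w)
        = r ⬝ᵥ r - 2 * ε * (r ⬝ᵥ w) + ε ^ 2 * (w ⬝ᵥ w) := by
      simp only [sub_dotProduct, dotProduct_sub, smul_dotProduct, dotProduct_smul,
        smul_eq_mul, dotProduct_comm w r]
      ring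
    rw [e2] at h1
    linarith
  by_cases hww : w ⬝ᵥ w = 0
  · have : w = 0 := dotProduct_self_eq_zero.mp hww
    rw [this, dotProduct_zero]
  · have hpos : 0 < w ⬝ᵥ w := lt_of_le_of_ne (dot_self_nonneg w) (Ne.symm hww)
    have h2 := key ((r ⬝ᵥ w) / (w ⬝ᵥ w))
    have h3 : (r ⬝ᵥ w) ^ 2 ≤ 0 := by
      have e : ((r ⬝ᵥ w) / (w ⬝ᵥ w)) ^ 2 * (w ⬝ᵥ w)
          - 2 * ((r ⬝ᵥ w) / (w ⬝ᵥ w)) * (r ⬝ᵥ w) = -((r ⬝ᵥ w) ^ 2) / (w ⬝ᵥ w) := by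
        field_simp
        ring
      rw [e] at h2
      have h4 := mul_nonneg h2 hpos.le
      rw [div_mul_cancel₀ _ hww] at h4
      linarith
    have := sq_nonneg (r ⬝ᵥ w)
    have : (r ⬝ᵥ w) ^ 2 = 0 := le_antisymm h3 this
    exact pow_eq_zero_iff (by norm_num) |>.mp this

/-- Existence of a Galerkin iterate on a subspace where `A` is positive definite. -/
lemma galerkin_exists (A : Matrix (Fin n) (Fin n) ℝ) (b : Fin n → ℝ)
    (W : Submodule ℝ (Fin n → ℝ))
    (hpd : ∀ z ∈ W, z ≠ 0 → 0 < z ⬝ᵥ A.mulVec z) :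
    ∃ x ∈ W, ∀ z ∈ W, (b - A.mulVec x) ⬝ᵥ z = 0 := by
  classical
  let B : (Fin n → ℝ) →ₗ[ℝ] (Fin n → ℝ) →ₗ[ℝ] ℝ :=
    LinearMap.mk₂ ℝ (fun x z => A.mulVec x ⬝ᵥ z)
      (fun x x' z => by simp [Matrix.mulVec_add, add_dotProduct])
      (fun c x z => by simp [Matrix.mulVec_smul, smul_dotProduct])
      (fun x z z' => by simp [dotProduct_add])
      (fun c x z => by simp [dotProduct_smul])
  let Φ : W →ₗ[ℝ] Module.Dual ℝ W := ((B.compl₂ W.subtype).comp W.subtype)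
  have hinj : Function.Injective Φ := by
    rw [← LinearMap.ker_eq_bot, LinearMap.ker_eq_bot']
    intro x hx
    by_contra hxne
    have hx0 : (x : Fin n → ℝ) ≠ 0 := fun h => hxne (Subtype.ext h)
    have hpos := hpd x x.2 hx0
    have := LinearMap.congr_fun hx x
    simp only [Φ, LinearMap.comp_apply, LinearMap.compl₂_apply, Submodule.subtype_apply,
      LinearMap.zero_apply, B, LinearMap.mk₂_apply] at this
    rw [dotProduct_comm] at hpos
    exact absurd this (ne_of_gt hpos)
  obtain ⟨e⟩ : Nonempty (Module.Dual ℝ W ≃ₗ[ℝ] W) :=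
    FiniteDimensional.nonempty_linearEquiv_of_finrank_eq Subspace.dual_finrank_eq
  have hendo : Function.Injective (e.toLinearMap ∘ₗ Φ) := e.injective.comp hinj
  have hsurj : Function.Surjective (e.toLinearMap ∘ₗ Φ) :=
    LinearMap.injective_iff_surjective.mp hendo
  have hΦsurj : Function.Surjective Φ := by
    intro φ
    obtain ⟨x, hx⟩ := hsurj (e φ)
    exact ⟨x, e.injective (by simpa using hx)⟩
  let β : Module.Dual ℝ W :=
    { toFun := fun z => b ⬝ᵥ (z : Fin n → ℝ)
      map_add' := fun z z' => by simp [dotProduct_add]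
      map_smul' := fun c z => by simp [dotProduct_smul] }
  obtain ⟨x, hx⟩ := hΦsurj β
  refine ⟨x, x.2, fun z hz => ?_⟩
  have := LinearMap.congr_fun hx ⟨z, hz⟩
  simp only [Φ, LinearMap.comp_apply, LinearMap.compl₂_apply, Submodule.subtype_apply,
    B, LinearMap.mk₂_apply, β, LinearMap.coe_mk, AddHom.coe_mk] at this
  rw [sub_dotProduct, this, sub_self]

end MinresAux

set_option maxHeartbeats 2000000 in
open MinresAux in
/-- Let `A` be symmetric, `b ≠ 0` with grade `g`, and `1 ≤ t < g`. Let `p s`,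
`0 ≤ s ≤ t`, minimize `‖b − A q‖` over `K_s(A,b)` with residuals `r_s = b − A (p s)`.
If `r_sᵀ A r_s > 0` for all `0 ≤ s ≤ t−1`, then `A b ≠ 0` and
`p_tᵀ b ≥ p₁ᵀ b = (bᵀAb/‖Ab‖²) ‖b‖²`. -/
theorem minres_iterate_lower_bound {n : ℕ} (A : Matrix (Fin n) (Fin n) ℝ) (hA : A.IsSymm)
    (b : Fin n → ℝ) (hb : b ≠ 0) (g : ℕ) (hg : IsGrade A b g)
    (t : ℕ) (ht : 1 ≤ t) (htg : t < g)
    (p : ℕ → Fin n → ℝ)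
    (hmem : ∀ s ≤ t, p s ∈ Krylov A b s)
    (hmin : ∀ s ≤ t, ∀ q ∈ Krylov A b s,
      euclNorm (b - A.mulVec (p s)) ≤ euclNorm (b - A.mulVec q))
    (hnpc : ∀ s < t, 0 < (b - A.mulVec (p s)) ⬝ᵥ A.mulVec (b - A.mulVec (p s))) :
    A.mulVec b ≠ 0 ∧ p 1 ⬝ᵥ b ≤ p t ⬝ᵥ b ∧
      p 1 ⬝ᵥ b = (b ⬝ᵥ A.mulVec b) / euclNorm (A.mulVec b) ^ 2 * euclNorm b ^ 2 := by
  classical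
  -- A b ≠ 0
  have hAb : A.mulVec b ≠ 0 := by
    have li := krylov_li (A := A) (b := b) hg (m := 2) (by omega)
    have h1 := li.ne_zero ⟨1, by omega⟩
    simpa using h1
  -- residuals
  set r : ℕ → Fin n → ℝ := fun s => b - A.mulVec (p s) with hrdef
  have hrk : ∀ s, r s = b - A.mulVec (p s) := fun s => rfl
  have hmin' : ∀ s ≤ t, ∀ q ∈ Krylov A b s,
      r s ⬝ᵥ r s ≤ (b - A.mulVec q) ⬝ᵥ (b - A.mulVec q) :=
    fun s hs q hq => dot_le_of_euclNorm_le (hmin s hs q hq)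
  have horth : ∀ s ≤ t, ∀ y ∈ Krylov A b s, r s ⬝ᵥ A.mulVec y = 0 :=
    fun s hs y hy => min_orth (hmem s hs) (hmin' s hs) hy
  have hrmem : ∀ s ≤ t, r s ∈ Krylov A b (s + 1) := fun s hs =>
    Submodule.sub_mem _ (self_mem_krylov (by omega)) (mulVec_krylov_mem (hmem s hs))
  -- positive definiteness on Krylov spaces
  have hpd : ∀ s, s ≤ t → ∀ z ∈ Krylov A b s, z ≠ 0 → 0 < z ⬝ᵥ A.mulVec z := by
    intro s
    induction s with
    | zero =>
      intro _ z hz hzne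
      rw [krylov_zero, Submodule.mem_bot] at hz
      exact absurd hz hzne
    | succ s ih =>
      intro hs1 z hz hzne
      have hst : s ≤ t := by omega
      have hslt : s < t := by omega
      have hnpcs := hnpc s hslt
      have hrs_not : r s ∉ Krylov A b s := by
        intro hmem'
        have h0 := horth s hst (r s) hmem'
        linarith
      have hsplit : Krylov A b s ⊔ Submodule.span ℝ {r s} = Krylov A b (s + 1) := by
        have hle : Krylov A b s ⊔ Submodule.span ℝ {r s} ≤ Krylov A b (s + 1) := by
          refine sup_le (krylov_mono (by omega)) ?_
          rw [Submodule.span_le, Set.singleton_subset_iff]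
          exact hrmem s hst
        refine Submodule.eq_of_le_of_finrank_le hle ?_
        have hlt : Krylov A b s < Krylov A b s ⊔ Submodule.span ℝ {r s} := by
          refine lt_of_le_of_ne le_sup_left ?_
          intro heq
          have hm : r s ∈ Krylov A b s ⊔ Submodule.span ℝ {r s} :=
            Submodule.mem_sup_right (Submodule.mem_span_singleton_self _)
          rw [← heq] at hm
          exact hrs_not hm
        have h1 := Submodule.finrank_lt_finrank_of_lt hlt
        rw [hg.2.1 s (by omega)] at h1
        rw [hg.2.1 (s + 1) (by omega)]
        omega
      rw [← hsplit] at hz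
      obtain ⟨y, hy, w, hw, rfl⟩ := Submodule.mem_sup.mp hz
      obtain ⟨c, rfl⟩ := Submodule.mem_span_singleton.mp hw
      have hcross : r s ⬝ᵥ A.mulVec y = 0 := horth s hst y hy
      have hcross2 : y ⬝ᵥ A.mulVec (r s) = 0 := by
        rw [← adj hA, dotProduct_comm]
        exact hcross
      have hexp : (y + c • r s) ⬝ᵥ A.mulVec (y + c • r s)
          = y ⬝ᵥ A.mulVec y + c ^ 2 * (r s ⬝ᵥ A.mulVec (r s)) := by
        simp only [Matrix.mulVec_add, Matrix.mulVec_smul, dotProduct_add, add_dotProduct,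
          dotProduct_smul, smul_dotProduct, smul_eq_mul, hcross, hcross2, mul_zero]
        ring
      rw [hexp]
      rcases eq_or_ne y 0 with hy0 | hy0
      · have hc : c ≠ 0 := by
          intro h
          apply hzne
          rw [hy0, h]
          simp
        have hc2 : 0 < c ^ 2 := by positivity
        have : y ⬝ᵥ A.mulVec y = 0 := by rw [hy0]; simp
        nlinarith
      · have hypos := ih hst y hy hy0
        nlinarith [sq_nonneg c]
  -- Galerkin iterates
  have hGal : ∀ k, k ≤ t → ∃ x, x ∈ Krylov A b k ∧
      ∀ z ∈ Krylov A b k, (b - A.mulVec x) ⬝ᵥ z = 0 := by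
    intro k hk
    obtain ⟨x, hx1, hx2⟩ := galerkin_exists A b (Krylov A b k) (fun z hz hzne => hpd k hk z hz hzne)
    exact ⟨x, hx1, hx2⟩
  choose G hGmem hGorth using hGal
  -- Galerkin monotonicity
  have hGmono : ∀ k (hk1 : k + 1 ≤ t),
      G k (Nat.le_of_succ_le hk1) ⬝ᵥ b ≤ G (k + 1) hk1 ⬝ᵥ b := by
    intro k hk1
    have hk : k ≤ t := Nat.le_of_succ_le hk1
    set x := G k hk with hx
    set x' := G (k + 1) hk1 with hx'
    have e1 : A.mulVec x ⬝ᵥ x = b ⬝ᵥ x := by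
      have h := hGorth k hk x (hGmem k hk)
      rw [sub_dotProduct] at h
      linarith
    have e2 : A.mulVec x' ⬝ᵥ x' = b ⬝ᵥ x' := by
      have h := hGorth (k + 1) hk1 x' (hGmem (k + 1) hk1)
      rw [sub_dotProduct] at h
      linarith
    have e3 : A.mulVec x' ⬝ᵥ x = b ⬝ᵥ x := by
      have h := hGorth (k + 1) hk1 x (krylov_mono (by omega) (hGmem k hk))
      rw [sub_dotProduct] at h
      linarith
    have hΔmem : x' - x ∈ Krylov A b (k + 1) :=
      Submodule.sub_mem _ (hGmem (k + 1) hk1) (krylov_mono (by omega) (hGmem k hk))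
    have hΔ : 0 ≤ (x' - x) ⬝ᵥ A.mulVec (x' - x) := by
      rcases eq_or_ne (x' - x) 0 with h | h
      · rw [h]; simp
      · exact le_of_lt (hpd (k + 1) hk1 _ hΔmem h)
    have c1 : x ⬝ᵥ A.mulVec x' = b ⬝ᵥ x := by
      rw [dotProduct_comm]; exact e3
    have c2 : x' ⬝ᵥ A.mulVec x = b ⬝ᵥ x := by
      rw [← adj hA]; exact e3
    have c3 : x' ⬝ᵥ A.mulVec x' = b ⬝ᵥ x' := by
      rw [dotProduct_comm]; exact e2
    have c4 : x ⬝ᵥ A.mulVec x = b ⬝ᵥ x := by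
      rw [dotProduct_comm]; exact e1
    have hexp : (x' - x) ⬝ᵥ A.mulVec (x' - x) = b ⬝ᵥ x' - b ⬝ᵥ x := by
      simp only [Matrix.mulVec_sub, dotProduct_sub, sub_dotProduct, c1, c2, c3, c4]
      ring
    rw [hexp] at hΔ
    rw [dotProduct_comm x b, dotProduct_comm x' b]
    linarith
  -- convex combination step
  have hstep : ∀ k (hk1 : k + 1 ≤ t), ∃ c : ℝ, 0 ≤ c ∧ c ≤ 1 ∧
      p (k + 1) = c • p k + (1 - c) • G (k + 1) hk1 := by
    intro k hk1
    have hk : k ≤ t := Nat.le_of_succ_le hk1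
    have hkg : k < g := lt_of_le_of_lt hk htg
    have hk1g : k + 1 < g := lt_of_le_of_lt hk1 htg
    set xg := G (k + 1) hk1 with hxg
    set rg := b - A.mulVec xg with hrg
    have hGo := hGorth (k + 1) hk1
    have hGm := hGmem (k + 1) hk1
    have hrm_mem : r k ∈ Krylov A b (k + 1) := hrmem k hk
    have h1 : r k ⬝ᵥ rg = 0 := by
      have h := hGo (r k) hrm_mem
      rw [dotProduct_comm]
      exact h
    have h2 : r k ≠ 0 := by rw [hrk]; exact resid_ne hg hkg (hmem k hk)
    have h3 : rg ≠ 0 := by rw [hrg]; exact resid_ne hg hk1g hGm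
    set z1 := r k - rg with hz1
    have hz1A : z1 = A.mulVec (xg - p k) := by
      rw [hz1, hrk, hrg, Matrix.mulVec_sub]
      abel
    have hz1ne : z1 ≠ 0 := by
      intro h
      have he : r k = rg := sub_eq_zero.mp h
      rw [he] at h1
      exact h3 (dotProduct_self_eq_zero.mp h1)
    have hz1mem : z1 ∈ Submodule.map A.mulVecLin (Krylov A b (k + 1)) := by
      rw [hz1A]
      exact mem_AK.mpr ⟨xg - p k,
        Submodule.sub_mem _ hGm (krylov_mono (by omega) (hmem k hk)), rfl⟩
    have hz1orth : ∀ y ∈ Krylov A b k, z1 ⬝ᵥ A.mulVec y = 0 := by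
      intro y hy
      rw [hz1, sub_dotProduct, horth k hk y hy, hGo _ (mulVec_krylov_mem hy), sub_self]
    have hz1notin : z1 ∉ Submodule.map A.mulVecLin (Krylov A b k) := by
      intro hmem'
      obtain ⟨y, hy, hyz⟩ := mem_AK.mp hmem'
      have h0 : z1 ⬝ᵥ z1 = 0 := by
        have hh := hz1orth y hy
        rwa [hyz] at hh
      exact hz1ne (dotProduct_self_eq_zero.mp h0)
    have hAKsplit : Submodule.map A.mulVecLin (Krylov A b k) ⊔ Submodule.span ℝ {z1}
        = Submodule.map A.mulVecLin (Krylov A b (k + 1)) := by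
      have hle : Submodule.map A.mulVecLin (Krylov A b k) ⊔ Submodule.span ℝ {z1}
          ≤ Submodule.map A.mulVecLin (Krylov A b (k + 1)) := by
        refine sup_le (Submodule.map_mono (krylov_mono (by omega))) ?_
        rw [Submodule.span_le, Set.singleton_subset_iff]
        exact hz1mem
      refine Submodule.eq_of_le_of_finrank_le hle ?_
      have hlt : Submodule.map A.mulVecLin (Krylov A b k)
          < Submodule.map A.mulVecLin (Krylov A b k) ⊔ Submodule.span ℝ {z1} := by
        refine lt_of_le_of_ne le_sup_left ?_
        intro heq
        have hm : z1 ∈ Submodule.map A.mulVecLin (Krylov A b k) ⊔ Submodule.span ℝ {z1} :=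
          Submodule.mem_sup_right (Submodule.mem_span_singleton_self _)
        rw [← heq] at hm
        exact hz1notin hm
      have h4 := Submodule.finrank_lt_finrank_of_lt hlt
      rw [finrank_AK hg hkg] at h4
      rw [finrank_AK hg hk1g]
      omega
    set z2 := r (k + 1) - rg with hz2
    have hz2orth : ∀ y ∈ Krylov A b k, z2 ⬝ᵥ A.mulVec y = 0 := by
      intro y hy
      rw [hz2, sub_dotProduct, horth (k + 1) hk1 y (krylov_mono (by omega) hy),
        hGo _ (mulVec_krylov_mem hy), sub_self]
    have hz2mem : z2 ∈ Submodule.map A.mulVecLin (Krylov A b (k + 1)) := by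
      have hz2A : z2 = A.mulVec (xg - p (k + 1)) := by
        rw [hz2, hrk, hrg, Matrix.mulVec_sub]
        abel
      rw [hz2A]
      exact mem_AK.mpr ⟨xg - p (k + 1), Submodule.sub_mem _ hGm (hmem (k + 1) hk1), rfl⟩
    rw [← hAKsplit] at hz2mem
    obtain ⟨u, hu, w, hw, huw⟩ := Submodule.mem_sup.mp hz2mem
    obtain ⟨c, rfl⟩ := Submodule.mem_span_singleton.mp hw
    have hu0 : u = 0 := by
      obtain ⟨y, hy, hyu⟩ := mem_AK.mp hu
      have d1 : u ⬝ᵥ z2 = 0 := by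
        have hh := hz2orth y hy
        rw [hyu] at hh
        rwa [dotProduct_comm]
      have d2 : u ⬝ᵥ z1 = 0 := by
        have hh := hz1orth y hy
        rw [hyu] at hh
        rwa [dotProduct_comm]
      have hue : u = z2 - c • z1 := eq_sub_of_add_eq huw
      have huu : u ⬝ᵥ u = 0 := by
        nth_rewrite 2 [hue]
        rw [dotProduct_sub, dotProduct_smul, d1, d2, smul_eq_mul, mul_zero, sub_zero]
      exact dotProduct_self_eq_zero.mp huu
    have hz2z1 : r (k + 1) = c • r k + (1 - c) • rg := by
      have hthis : z2 = c • z1 := by rw [← huw, hu0, zero_add]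
      rw [hz2, hz1] at hthis
      linear_combination (norm := module) hthis
    have ha : 0 < r k ⬝ᵥ r k := dot_self_pos h2
    have hgpos : 0 < rg ⬝ᵥ rg := dot_self_pos h3
    have h1' : rg ⬝ᵥ r k = 0 := by rw [dotProduct_comm]; exact h1
    have hid : r (k + 1) ⬝ᵥ r (k + 1)
        = c ^ 2 * (r k ⬝ᵥ r k) + (1 - c) ^ 2 * (rg ⬝ᵥ rg) := by
      rw [hz2z1]
      simp only [add_dotProduct, dotProduct_add, smul_dotProduct, dotProduct_smul,
        smul_eq_mul, h1, h1', mul_zero]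
      ring
    have hle1 : r (k + 1) ⬝ᵥ r (k + 1) ≤ r k ⬝ᵥ r k := by
      have h := hmin' (k + 1) hk1 (p k) (krylov_mono (by omega) (hmem k hk))
      rw [← hrk k] at h
      exact h
    have hle2 : r (k + 1) ⬝ᵥ r (k + 1) ≤ rg ⬝ᵥ rg := by
      have h := hmin' (k + 1) hk1 xg hGm
      rw [← hrg] at h
      exact h
    have hc2 : c ^ 2 ≤ 1 := by nlinarith [mul_nonneg (sq_nonneg (1 - c)) hgpos.le]
    have hc3 : (1 - c) ^ 2 ≤ 1 := by nlinarith [mul_nonneg (sq_nonneg c) ha.le]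
    have hc0 : 0 ≤ c := by nlinarith
    have hc1 : c ≤ 1 := by nlinarith
    refine ⟨c, hc0, hc1, ?_⟩
    have hmemc : c • p k + (1 - c) • xg ∈ Krylov A b (k + 1) :=
      Submodule.add_mem _ (Submodule.smul_mem _ _ (krylov_mono (by omega) (hmem k hk)))
        (Submodule.smul_mem _ _ hGm)
    have hdiff : A.mulVec (p (k + 1) - (c • p k + (1 - c) • xg)) = 0 := by
      rw [Matrix.mulVec_sub, Matrix.mulVec_add, Matrix.mulVec_smul, Matrix.mulVec_smul]
      have hcomb := hz2z1
      rw [hrk, hrk, hrg] at hcomb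
      linear_combination (norm := module) (-1 : ℝ) • hcomb
    have hzero := krylov_inj hg hk1g
      (Submodule.sub_mem _ (hmem (k + 1) hk1) hmemc) hdiff
    exact sub_eq_zero.mp hzero
  -- main induction
  have main : ∀ k (hk : k ≤ t),
      (∀ j, j ≤ k → p j ⬝ᵥ b ≤ p k ⬝ᵥ b) ∧ p k ⬝ᵥ b ≤ G k hk ⬝ᵥ b := by
    intro k
    induction k with
    | zero =>
      intro hk
      have hp0 : p 0 = 0 := by
        have h := hmem 0 (Nat.zero_le t)
        rwa [krylov_zero, Submodule.mem_bot] at h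
      have hG0 : G 0 hk = 0 := by
        have h := hGmem 0 hk
        rwa [krylov_zero, Submodule.mem_bot] at h
      constructor
      · intro j hj
        have : j = 0 := by omega
        rw [this]
      · rw [hp0, hG0]
    | succ k ih =>
      intro hk1
      have hk : k ≤ t := by omega
      obtain ⟨ihmono, ihG⟩ := ih hk
      obtain ⟨c, hc0, hc1, hcomb⟩ := hstep k hk1
      have hGm := hGmono k hk1
      have hpG : p k ⬝ᵥ b ≤ G (k + 1) hk1 ⬝ᵥ b := le_trans ihG hGm
      have hval : p (k + 1) ⬝ᵥ b = c * (p k ⬝ᵥ b) + (1 - c) * (G (k + 1) hk1 ⬝ᵥ b) := by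
        rw [hcomb, add_dotProduct, smul_dotProduct, smul_dotProduct, smul_eq_mul, smul_eq_mul]
      have hup : p k ⬝ᵥ b ≤ p (k + 1) ⬝ᵥ b := by nlinarith
      have hdown : p (k + 1) ⬝ᵥ b ≤ G (k + 1) hk1 ⬝ᵥ b := by nlinarith
      refine ⟨?_, hdown⟩
      intro j hj
      rcases Nat.lt_or_ge j (k + 1) with h | h
      · exact le_trans (ihmono j (by omega)) hup
      · have : j = k + 1 := by omega
        rw [this]
  have hmono := (main t le_rfl).1 1 ht
  refine ⟨hAb, hmono, ?_⟩
  -- the formula for p 1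
  have hK1 : Krylov A b 1 = Submodule.span ℝ {b} := by
    rw [Krylov, Set.range_unique]
    simp
  have hp1 := hmem 1 ht
  rw [hK1] at hp1
  obtain ⟨c, hc⟩ := Submodule.mem_span_singleton.mp hp1
  have hdpos : 0 < A.mulVec b ⬝ᵥ A.mulVec b := dot_self_pos hAb
  have expand : ∀ x : ℝ, (b - A.mulVec (x • b)) ⬝ᵥ (b - A.mulVec (x • b))
      = b ⬝ᵥ b - 2 * x * (b ⬝ᵥ A.mulVec b) + x ^ 2 * (A.mulVec b ⬝ᵥ A.mulVec b) := by
    intro x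
    rw [Matrix.mulVec_smul]
    simp only [sub_dotProduct, dotProduct_sub, smul_dotProduct, dotProduct_smul, smul_eq_mul]
    rw [dotProduct_comm (A.mulVec b) b]
    ring
  set e := b ⬝ᵥ A.mulVec b with he
  set d := A.mulVec b ⬝ᵥ A.mulVec b with hd
  have hqmem : (e / d) • b ∈ Krylov A b 1 := by
    rw [hK1]
    exact Submodule.smul_mem _ _ (Submodule.mem_span_singleton_self b)
  have hcmp := hmin' 1 ht ((e / d) • b) hqmem
  rw [hrk 1, ← hc, expand, expand] at hcmp
  have hdne : d ≠ 0 := ne_of_gt hdpos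
  have hceq : c = e / d := by
    have h5 : (c * d - e) ^ 2 ≤ 0 := by
      have h6 : c ^ 2 * d - 2 * c * e ≤ (e / d) ^ 2 * d - 2 * (e / d) * e := by linarith
      have h7 : (e / d) ^ 2 * d - 2 * (e / d) * e = -(e ^ 2) / d := by
        field_simp
        ring
      rw [h7] at h6
      have h8 := mul_le_mul_of_nonneg_right h6 hdpos.le
      rw [div_mul_cancel₀ _ hdne] at h8
      nlinarith
    have h9 : (c * d - e) ^ 2 = 0 := le_antisymm h5 (sq_nonneg _)
    have h10 : c * d - e = 0 := by
      exact pow_eq_zero_iff (by norm_num) |>.mp h9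
    field_simp
    linarith
  have hp1b : p 1 ⬝ᵥ b = c * (b ⬝ᵥ b) := by
    rw [← hc, smul_dotProduct, smul_eq_mul]
  rw [hp1b, hceq, sq_euclNorm, sq_euclNorm, ← hd]
end

section
/- Let A be a symmetric real n×n matrix, g ∈ ℝⁿ nonzero, and set b = −g. For t ≥ 0 let p_t be a minimizer of ‖b − A p‖ over p ∈ K_t(A,b) (with p_0 = 0) and r_t := b − A p_t. Suppose ‖r_t‖ > θ‖g‖ for some θ > 0, and define the scaled direction d = (‖g‖/‖r_t‖) r_t. Then ‖d‖ = ‖g‖ and −dᵀg = ‖r_t‖·‖g‖ > θ‖g‖². -/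
open Matrix

lemma euclNorm_nonneg {n : ℕ} (v : Fin n → ℝ) : 0 ≤ euclNorm v := Real.sqrt_nonneg _

lemma euclNorm_sq {n : ℕ} (v : Fin n → ℝ) : euclNorm v ^ 2 = v ⬝ᵥ v := by
  have : v ⬝ᵥ v = ∑ i, v i ^ 2 := by
    simp [dotProduct, sq]
  rw [this, euclNorm, Real.sq_sqrt]
  positivity

lemma euclNorm_pos {n : ℕ} {v : Fin n → ℝ} (hv : v ≠ 0) : 0 < euclNorm v := by
  rcases (euclNorm_nonneg v).lt_or_eq with h | h
  · exact h
  · exfalso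
    apply hv
    have h2 : euclNorm v ^ 2 = 0 := by rw [← h]; ring
    rw [euclNorm_sq] at h2
    have : ∀ i, v i = 0 := by
      intro i
      have hsum : ∑ i, v i ^ 2 = 0 := by
        rw [← h2]; simp [dotProduct, sq]
      have := (Finset.sum_eq_zero_iff_of_nonneg (fun i _ => sq_nonneg (v i))).mp hsum i (Finset.mem_univ i)
      exact pow_eq_zero_iff (by norm_num) |>.mp this
    funext i; exact this i

lemma euclNorm_smul {n : ℕ} (c : ℝ) (v : Fin n → ℝ) :
    euclNorm (c • v) = |c| * euclNorm v := by
  unfold euclNorm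
  have : ∑ i, (c • v) i ^ 2 = c ^ 2 * ∑ i, v i ^ 2 := by
    rw [Finset.mul_sum]; simp [mul_pow]
  rw [this, Real.sqrt_mul (sq_nonneg c), Real.sqrt_sq_eq_abs]

/-- Let `A` be symmetric, `g ≠ 0`, `b = −g`, and for `t ≥ 0` let `p` minimize
`‖b − A q‖` over `q ∈ K_t(A,b)` with residual `r = b − A p`. If `‖r‖ > θ‖g‖` with `θ > 0`,
then the scaled direction `d = (‖g‖/‖r‖) r` satisfies `‖d‖ = ‖g‖` and
`−dᵀg = ‖r‖·‖g‖ > θ‖g‖²`. -/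
theorem npc_direction_properties {n : ℕ} (A : Matrix (Fin n) (Fin n) ℝ) (hA : A.IsSymm)
    (g : Fin n → ℝ) (hg : g ≠ 0) (b : Fin n → ℝ) (hb : b = -g)
    (t : ℕ) (p : Fin n → ℝ) (hmem : p ∈ Krylov A b t)
    (hmin : ∀ q ∈ Krylov A b t, euclNorm (b - A.mulVec p) ≤ euclNorm (b - A.mulVec q))
    (θ : ℝ) (hθ : 0 < θ)
    (hres : θ * euclNorm g < euclNorm (b - A.mulVec p)) :
    euclNorm ((euclNorm g / euclNorm (b - A.mulVec p)) • (b - A.mulVec p)) = euclNorm g ∧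
    -(((euclNorm g / euclNorm (b - A.mulVec p)) • (b - A.mulVec p)) ⬝ᵥ g) =
      euclNorm (b - A.mulVec p) * euclNorm g ∧
    θ * euclNorm g ^ 2 < euclNorm (b - A.mulVec p) * euclNorm g := by
  set r : Fin n → ℝ := b - A.mulVec p with hr
  have hgpos : 0 < euclNorm g := euclNorm_pos hg
  have hrpos : 0 < euclNorm r := lt_trans (by positivity) hres
  -- orthogonality: r ⬝ᵥ A.mulVec p = 0
  have horth : r ⬝ᵥ A.mulVec p = 0 := by
    set c : ℝ := r ⬝ᵥ A.mulVec p with hc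
    set k : ℝ := A.mulVec p ⬝ᵥ A.mulVec p with hk
    have hk0 : 0 ≤ k := by
      rw [hk, ← euclNorm_sq]; positivity
    have key : ∀ s : ℝ, 0 ≤ -2 * s * c + s ^ 2 * k := by
      intro s
      have hq : p + s • p ∈ Krylov A b t :=
        Submodule.add_mem _ hmem (Submodule.smul_mem _ s hmem)
      have h1 := hmin _ hq
      have h2 : b - A.mulVec (p + s • p) = r - s • A.mulVec p := by
        rw [Matrix.mulVec_add, Matrix.mulVec_smul, hr]
        abel
      rw [h2] at h1
      have h3 : euclNorm r ^ 2 ≤ euclNorm (r - s • A.mulVec p) ^ 2 := by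
        have := euclNorm_nonneg r
        nlinarith [euclNorm_nonneg (r - s • A.mulVec p)]
      rw [euclNorm_sq, euclNorm_sq] at h3
      have hsym : A.mulVec p ⬝ᵥ r = r ⬝ᵥ A.mulVec p := dotProduct_comm _ _
      have hexp : (r - s • A.mulVec p) ⬝ᵥ (r - s • A.mulVec p)
          = r ⬝ᵥ r - 2 * s * c + s ^ 2 * k := by
        simp only [sub_dotProduct, dotProduct_sub, smul_dotProduct,
          dotProduct_smul, smul_eq_mul, hsym, ← hc, ← hk]
        ring
      rw [hexp] at h3
      linarith
    have h := key (c / (k + 1))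
    have hk1 : 0 < k + 1 := by linarith
    have hm : 0 ≤ (k + 1) ^ 2 * (-2 * (c / (k + 1)) * c + (c / (k + 1)) ^ 2 * k) :=
      mul_nonneg (by positivity) h
    have heq : (k + 1) ^ 2 * (-2 * (c / (k + 1)) * c + (c / (k + 1)) ^ 2 * k)
        = -(c ^ 2 * (k + 2)) := by
      field_simp
      ring
    rw [heq] at hm
    nlinarith [sq_nonneg c]
  have hrb : r ⬝ᵥ b = euclNorm r ^ 2 := by
    have hbr : b = r + A.mulVec p := by rw [hr]; abel
    rw [euclNorm_sq]
    calc r ⬝ᵥ b = r ⬝ᵥ r + r ⬝ᵥ A.mulVec p := by rw [hbr, dotProduct_add]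
    _ = r ⬝ᵥ r := by rw [horth, add_zero]
  have hcnn : 0 ≤ euclNorm g / euclNorm r := by positivity
  refine ⟨?_, ?_, ?_⟩
  · rw [euclNorm_smul, abs_of_nonneg hcnn]
    field_simp
  · have hrg : r ⬝ᵥ g = -(euclNorm r ^ 2) := by
      have : g = -b := by rw [hb]; simp
      rw [this, dotProduct_neg, hrb]
    rw [smul_dotProduct, smul_eq_mul, hrg]
    field_simp
  · nlinarith
end
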